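/- arXiv:1612.01593 — 7 statements merged into one kernel-verified Lean document; each statement's English description precedes it below -/
import Mathlib

section
/- Let f : ℝ → ℝ be non-increasing on [0, ∞), and suppose the function H(x) = x · f(x) is convex on [0, ∞). Then f is convex on (0, ∞). -/
open Set

/-- With `z = a x + b y` and `a + b = 1`, one has
`a (x f x) + b (y f y) = z (a f x + b f y) + a b (f x - f y) (x - y)`, and the last term is
`≤ 0` for antitone `f`; so convexity of `x ↦ x f x` at `z` gives that of `f` after dividing by `z > 0`. -/
theorem convexOn_of_antitoneOn_of_convexOn_mul_self {s : Set ℝ} {f : ℝ → ℝ}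
    (hs : Convex ℝ s) (hs_pos : s ⊆ Ioi 0) (hf : AntitoneOn f s)
    (hH : ConvexOn ℝ s (fun x => x * f x)) :
    ConvexOn ℝ s f := by
  refine ⟨hs, fun x hx y hy a b ha hb hab => ?_⟩
  simp only [smul_eq_mul]
  have hz : 0 < a * x + b * y := hs_pos (hs hx hy ha hb hab)
  have hanti : (f x - f y) * (x - y) ≤ 0 :=
    (antivaryOn_id_iff.2 hf).sub_mul_sub_nonpos hy hx
  have hdefect : a * (x * f x) + b * (y * f y) - (a * x + b * y) * (a * f x + b * f y)
      = a * b * ((f x - f y) * (x - y)) := by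
    linear_combination (-(a * (x * f x)) - b * (y * f y)) * hab
  have hHxy : (a * x + b * y) * f (a * x + b * y) ≤ a * (x * f x) + b * (y * f y) := by
    simpa only [smul_eq_mul] using hH.2 hx hy ha hb hab
  refine le_of_mul_le_mul_left ?_ hz
  linarith [mul_nonpos_of_nonneg_of_nonpos (mul_nonneg ha hb) hanti]

theorem stmt_0 (f : ℝ → ℝ)
    (hmono : ∀ x ∈ Ici (0:ℝ), ∀ y ∈ Ici (0:ℝ), x ≤ y → f y ≤ f x)
    (hH : ConvexOn ℝ (Ici 0) (fun x => x * f x)) :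
    ConvexOn ℝ (Ioi 0) f :=
  convexOn_of_antitoneOn_of_convexOn_mul_self (convex_Ioi 0) subset_rfl
    (AntitoneOn.mono hmono Ioi_subset_Ici_self)
    (hH.subset Ioi_subset_Ici_self (convex_Ioi 0))
end

section
/- With g₁, g₂, L₁, L₂, a, b > 0 and Γ = g₂L₂/(g₁L₁) < 1, if L₁ ≤ log(1/Γ), then for every b > 0 the minimizer of u ↦ g₁ e^{−L₁ b u/(b+a)} + g₂ e^{−L₂ b(1−u)/(b+a)} over u ∈ [0,1] is u = 1. -/
open Set

theorem stmt_4 (g₁ g₂ L₁ L₂ a : ℝ)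
    (hg₁ : 0 < g₁) (hg₂ : 0 < g₂) (hL₁ : 0 < L₁) (hL₂ : 0 < L₂) (ha : 0 < a)
    (Γ : ℝ) (hΓdef : Γ = g₂ * L₂ / (g₁ * L₁)) (hΓ : Γ < 1)
    (hL₁ : L₁ ≤ Real.log (1 / Γ)) :
    ∀ b : ℝ, 0 < b →
      IsMinOn (fun u : ℝ =>
        g₁ * Real.exp (-(L₁ * b * u / (b + a))) +
        g₂ * Real.exp (-(L₂ * b * (1 - u) / (b + a)))) (Icc 0 1) 1 := by
  have hL₁pos : 0 < L₁ := by assumption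
  intro b hb
  have hba : 0 < b + a := by linarith
  have hΓpos : 0 < Γ := by rw [hΓdef]; positivity
  set c₁ := L₁ * b / (b + a) with hc₁
  set c₂ := L₂ * b / (b + a) with hc₂
  have hc₁pos : 0 < c₁ := by positivity
  have hc₁le : c₁ ≤ L₁ := by
    rw [hc₁, div_le_iff₀ hba]; nlinarith
  have hlog : L₁ ≤ -Real.log Γ := by
    rwa [one_div, Real.log_inv] at hL₁
  have hkey : Γ ≤ Real.exp (-c₁) := by
    calc Γ = Real.exp (Real.log Γ) := (Real.exp_log hΓpos).symm
    _ ≤ Real.exp (-c₁) := Real.exp_le_exp.mpr (by linarith)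
  have hkey2 : g₂ * L₂ ≤ g₁ * L₁ * Real.exp (-c₁) := by
    have hΓeq : g₂ * L₂ = Γ * (g₁ * L₁) := by
      rw [hΓdef]; field_simp
    rw [hΓeq]
    nlinarith [mul_pos hg₁ hL₁pos]
  rw [isMinOn_iff]
  intro u hu
  simp only [mem_Icc] at hu
  obtain ⟨hu0, hu1⟩ := hu
  have e0 : L₁ * b * (1:ℝ) / (b + a) = c₁ := by rw [hc₁]; ring
  have e0' : L₂ * b * (1 - (1:ℝ)) / (b + a) = 0 := by ring
  have e1 : L₁ * b * u / (b + a) = c₁ * u := by rw [hc₁]; ring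
  have e2 : L₂ * b * (1 - u) / (b + a) = c₂ * (1 - u) := by rw [hc₂]; ring
  rw [e0, e0', e1, e2, neg_zero, Real.exp_zero]
  -- exp bounds
  have h1 : Real.exp (-c₁) * (1 + c₁ * (1 - u)) ≤ Real.exp (-(c₁ * u)) := by
    have h := Real.add_one_le_exp (c₁ * (1 - u))
    have : Real.exp (-(c₁ * u)) = Real.exp (-c₁) * Real.exp (c₁ * (1 - u)) := by
      rw [← Real.exp_add]; ring_nf
    rw [this]
    have hep : (0:ℝ) < Real.exp (-c₁) := Real.exp_pos _
    nlinarith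
  have h2 : 1 - c₂ * (1 - u) ≤ Real.exp (-(c₂ * (1 - u))) := by
    have h := Real.add_one_le_exp (-(c₂ * (1 - u)))
    linarith
  -- core: g₁ * exp(-c₁) * c₁ ≥ g₂ * c₂
  have hcore : g₂ * c₂ ≤ g₁ * Real.exp (-c₁) * c₁ := by
    rw [hc₁, hc₂]
    have hr : 0 ≤ b / (b + a) := by positivity
    have : g₂ * (L₂ * b / (b + a)) = (g₂ * L₂) * (b / (b + a)) := by ring
    rw [this]
    have : g₁ * Real.exp (-c₁) * (L₁ * b / (b + a))
        = (g₁ * L₁ * Real.exp (-c₁)) * (b / (b + a)) := by ring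
    rw [this]
    exact mul_le_mul_of_nonneg_right hkey2 hr
  nlinarith [Real.exp_pos (-c₁), mul_le_mul_of_nonneg_right hcore (by linarith : (0:ℝ) ≤ 1 - u)]
end

section
/- Consider minimizing Σᵢ gᵢ·exp(−Lᵢ·β·uᵢ) over the simplex {u ≥ 0, Σuᵢ = 1} with gᵢ, Lᵢ, β > 0, and define αᵢ = 1/(Lᵢ gᵢ β). The unique minimizer u* has the waterfilling form: there exists ν > 0 such that uᵢ* = (1/(Lᵢβ))·(log(1/ν) − log αᵢ) if 1/ν > αᵢ, and uᵢ* = 0 if 1/ν ≤ αᵢ. -/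
/-!
Moving mass `u i` from a coordinate `i` in the support of a minimizer `u` to any coordinate `k`
stays in the simplex, so the directional derivative along `e k - e i` is nonnegative: the
marginal gain `f i = L i g i β exp (-L i β u i) = exp (-L i β u i) / α i` is maximal, equal to
some `ν`, on the support of `u`. Solving `exp (-L i β u i) = ν α i` on the support, and using
`f i = 1 / α i ≤ ν` off it, gives the waterfilling form.
-/

open Finset

variable {ι : Type*} [Fintype ι]

theorem hasFDerivAt_sum_apply {h : ι → ℝ → ℝ} {h' : ι → ℝ} {u : ι → ℝ}
    (hd : ∀ j, HasDerivAt (h j) (h' j) (u j)) :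
    HasFDerivAt (fun v => ∑ j, h j (v j))
      (∑ j, h' j • ContinuousLinearMap.proj (R := ℝ) (φ := fun _ : ι => ℝ) j) u := by
  refine HasFDerivAt.fun_sum fun j _ => ?_
  refine ((hd j).hasFDerivAt.comp u (hasFDerivAt_apply (𝕜 := ℝ) j u)).congr_fderiv ?_
  ext v
  simp [mul_comm]

section

variable [DecidableEq ι]

theorem add_smul_single_sub_single_mem_stdSimplex {u : ι → ℝ} (hu : u ∈ stdSimplex ℝ ι)
    (i k : ι) : u + u i • (Pi.single k 1 - Pi.single i 1) ∈ stdSimplex ℝ ι := by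
  refine ⟨fun j => ?_, ?_⟩
  · have := hu.1 j
    have := hu.1 i
    simp only [Pi.add_apply, Pi.smul_apply, Pi.sub_apply, Pi.single_apply, smul_eq_mul]
    split_ifs <;> subst_vars <;> linarith
  · simp [Finset.sum_add_distrib, ← Finset.mul_sum, Finset.sum_sub_distrib, hu.2]

theorem IsMinOn.stdSimplex_fderiv_single_le_of_pos {F : (ι → ℝ) → ℝ}
    {F' : (ι → ℝ) →L[ℝ] ℝ} {u : ι → ℝ} (hu : u ∈ stdSimplex ℝ ι)
    (hmin : IsMinOn F (stdSimplex ℝ ι) u) (hF : HasFDerivAt F F' u) {i : ι} (hi : 0 < u i)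
    (k : ι) : F' (Pi.single i 1) ≤ F' (Pi.single k 1) := by
  have hseg := (convex_stdSimplex ℝ ι).segment_subset hu
    (add_smul_single_sub_single_mem_stdSimplex hu i k)
  have := hmin.localize.hasFDerivWithinAt_nonneg hF.hasFDerivWithinAt
    (mem_posTangentConeAt_of_segment_subset hseg)
  rw [map_smul, map_sub, smul_eq_mul] at this
  nlinarith

end

theorem IsMinOn.stdSimplex_sum_deriv_le_of_pos {h : ι → ℝ → ℝ} {h' : ι → ℝ} {u : ι → ℝ}
    (hu : u ∈ stdSimplex ℝ ι) (hmin : IsMinOn (fun v => ∑ j, h j (v j)) (stdSimplex ℝ ι) u)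
    (hd : ∀ j, HasDerivAt (h j) (h' j) (u j)) {i : ι} (hi : 0 < u i) (k : ι) :
    h' i ≤ h' k := by
  classical
  simpa [Pi.single_apply] using
    hmin.stdSimplex_fderiv_single_le_of_pos hu (hasFDerivAt_sum_apply hd) hi k

theorem hasDerivAt_const_mul_exp_neg_mul (c a x : ℝ) :
    HasDerivAt (fun y => c * Real.exp (-(a * y))) (-(a * c * Real.exp (-(a * x)))) x :=
  ((((hasDerivAt_id' x).const_mul a).fun_neg.exp).const_mul c).congr_deriv (by ring)

theorem waterfilling_level_of_kkt {a α ν x : ℝ} (ha : 0 < a) (hα : 0 < α) (hν : 0 < ν)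
    (hx : 0 ≤ x) (hle : Real.exp (-(a * x)) / α ≤ ν)
    (heq : 0 < x → Real.exp (-(a * x)) / α = ν) :
    (α < 1 / ν → x = 1 / a * (Real.log (1 / ν) - Real.log α)) ∧ (1 / ν ≤ α → x = 0) := by
  rcases hx.eq_or_lt with rfl | hx
  · have : 1 / ν ≤ α := by
      rw [mul_zero, neg_zero, Real.exp_zero, div_le_iff₀ hα] at hle
      rwa [div_le_iff₀ hν, mul_comm]
    exact ⟨fun h => absurd h this.not_gt, fun _ => rfl⟩
  · have hexp : Real.exp (-(a * x)) = ν * α := by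
      rw [← heq hx, div_mul_cancel₀ _ hα.ne']
    have hlt : α < 1 / ν := by
      rw [lt_div_iff₀ hν, mul_comm, ← hexp, Real.exp_lt_one_iff]
      nlinarith
    refine ⟨fun _ => ?_, fun h => absurd hlt h.not_gt⟩
    have hlog := congrArg Real.log hexp
    rw [Real.log_exp, Real.log_mul hν.ne' hα.ne'] at hlog
    rw [one_div ν, Real.log_inv]
    field_simp
    linarith

theorem stmt_6_general (M : ℕ) (g L : Fin M → ℝ) (β : ℝ)
    (hg : ∀ i, 0 < g i) (hL : ∀ i, 0 < L i) (hβ : 0 < β)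
    (α : Fin M → ℝ) (hα : ∀ i, α i = 1 / (L i * g i * β))
    (u : Fin M → ℝ)
    (hu : u ∈ {u : Fin M → ℝ | (∀ i, 0 ≤ u i) ∧ ∑ i, u i = 1})
    (hmin : IsMinOn (fun v => ∑ i, g i * Real.exp (-(L i * β * v i)))
      {u : Fin M → ℝ | (∀ i, 0 ≤ u i) ∧ ∑ i, u i = 1} u) :
    ∃ ν : ℝ, 0 < ν ∧ ∀ i,
      (α i < 1 / ν → u i = 1 / (L i * β) * (Real.log (1 / ν) - Real.log (α i))) ∧
      (1 / ν ≤ α i → u i = 0) := by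
  have hαpos : ∀ i, 0 < α i := fun i => by
    have := hL i; have := hg i; rw [hα]; positivity
  set f : Fin M → ℝ := fun i => Real.exp (-(L i * β * u i)) / α i
  have hf : ∀ i, 0 < f i := fun i => div_pos (Real.exp_pos _) (hαpos i)
  have hderiv : ∀ j, HasDerivAt (fun x => g j * Real.exp (-(L j * β * x))) (-f j) (u j) := by
    intro j
    convert hasDerivAt_const_mul_exp_neg_mul (g j) (L j * β) (u j) using 1
    simp only [f, hα, one_div, div_inv_eq_mul]
    ring
  have hexch : ∀ i k, 0 < u i → f k ≤ f i := fun i k hi =>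
    neg_le_neg_iff.mp (hmin.stdSimplex_sum_deriv_le_of_pos hu hderiv hi k)
  obtain ⟨j₀, -, hj₀⟩ : ∃ j ∈ univ, (0 : ℝ) < u j :=
    exists_lt_of_sum_lt (by simpa using hu.2.symm ▸ one_pos)
  refine ⟨f j₀, hf j₀, fun i => waterfilling_level_of_kkt (mul_pos (hL i) hβ) (hαpos i) (hf j₀)
    (hu.1 i) (hexch j₀ i hj₀) fun hi => le_antisymm (hexch j₀ i hj₀) (hexch i j₀ hi)⟩

theorem stmt_6 (M : ℕ) (hM : 1 ≤ M) (g L : Fin M → ℝ) (β : ℝ)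
    (hg : ∀ i, 0 < g i) (hL : ∀ i, 0 < L i) (hβ : 0 < β)
    (α : Fin M → ℝ) (hα : ∀ i, α i = 1 / (L i * g i * β))
    (u : Fin M → ℝ)
    (hu : u ∈ {u : Fin M → ℝ | (∀ i, 0 ≤ u i) ∧ ∑ i, u i = 1})
    (hmin : IsMinOn (fun v => ∑ i, g i * Real.exp (-(L i * β * v i)))
      {u : Fin M → ℝ | (∀ i, 0 ≤ u i) ∧ ∑ i, u i = 1} u) :
    ∃ ν : ℝ, 0 < ν ∧ ∀ i,
      (α i < 1 / ν → u i = 1 / (L i * β) * (Real.log (1 / ν) - Real.log (α i))) ∧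
      (1 / ν ≤ α i → u i = 0) :=
  stmt_6_general M g L β hg hL hβ α hα u hu hmin
end

section
/- Let u* be the minimizer of Σᵢ gᵢ exp(−Lᵢβuᵢ) over the simplex, with gᵢ, Lᵢ, β > 0, and sort indices so that g₍₁₎L₍₁₎ ≥ g₍₂₎L₍₂₎ ≥ … ≥ g₍M₎L₍M₎. Then the set of indices with u*₍ᵢ₎ > 0 is a prefix: there exists 1 ≤ r₀ ≤ M such that u*₍ₛ₎ > 0 for all s ≤ r₀ and u*₍ₛ₎ = 0 for s > r₀. -/
/-!
Write `c = Lβ`. For `t ∈ [0, u j]`, moving mass `t` from a coordinate `j` with `u j > 0` to any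
coordinate `i` stays in the simplex, so first-order optimality at `t = 0` gives the waterfilling
condition `g i c i e^{-c i u i} ≤ g j c j e^{-c j u j}`. If `u i = 0` the left side is `g i c i`,
while the right side is `< g j c j`; hence the support of `u` is closed under passing to classes
with larger `g L`, i.e. it is an initial segment of the sorted order.
-/

open Finset Set

theorem HasDerivAt.nonneg_of_isMinOn_Icc {φ : ℝ → ℝ} {φ' a b : ℝ} (hab : a < b)
    (hmin : IsMinOn φ (Icc a b) a) (hφ : HasDerivAt φ φ' a) : 0 ≤ φ' := by
  have hdir : b - a ∈ posTangentConeAt (Icc a b) a :=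
    sub_mem_posTangentConeAt_of_segment_subset (segment_eq_Icc hab.le ▸ Subset.rfl)
  have hslope := hmin.localize.hasFDerivWithinAt_nonneg hφ.hasDerivWithinAt hdir
  rw [ContinuousLinearMap.toSpanSingleton_apply, smul_eq_mul] at hslope
  exact nonneg_of_mul_nonneg_right hslope (sub_pos.2 hab)

theorem IsLowerSet.exists_eq_Iic {α : Type*} [LinearOrder α] [Finite α] {s : Set α}
    (hs : IsLowerSet s) (hne : s.Nonempty) : ∃ r, s = Set.Iic r := by
  obtain ⟨r, hr, hmax⟩ := s.exists_max_image id s.toFinite hne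
  exact ⟨r, Set.ext fun a => ⟨hmax a, fun ha => hs ha hr⟩⟩

theorem IsMinOn.deriv_le_of_stdSimplex {ι : Type*} [Fintype ι]
    {f : ι → ℝ → ℝ} {f' : ι → ℝ} {u : ι → ℝ}
    (hmin : IsMinOn (fun v => ∑ k, f k (v k)) (stdSimplex ℝ ι) u) (hu : u ∈ stdSimplex ℝ ι)
    (hf : ∀ k, HasDerivAt (f k) (f' k) (u k)) (i : ι) {j : ι} (hj : 0 < u j) : f' j ≤ f' i := by
  classical
  set d : ι → ℝ := Pi.single i 1 - Pi.single j 1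
  have hmem : ∀ t ∈ Icc 0 (u j), u + t • d ∈ stdSimplex ℝ ι := by
    rintro t ⟨ht0, htj⟩
    refine ⟨fun k => ?_, ?_⟩
    · simp only [d, Pi.add_apply, Pi.smul_apply, Pi.sub_apply, Pi.single_apply, smul_eq_mul]
      split_ifs with hki hkj hkj <;> (try subst hkj) <;> linarith [hu.1 k]
    · simp [d, sum_add_distrib, ← mul_sum, sum_sub_distrib, hu.2]
  have hderiv : HasDerivAt (fun t : ℝ => ∑ k, f k (u k + t * d k)) (∑ k, f' k * d k) 0 := by
    refine HasDerivAt.fun_sum fun k _ => ?_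
    have hline : HasDerivAt (fun t : ℝ => u k + t * d k) (d k) 0 := by
      simpa using ((hasDerivAt_id (0 : ℝ)).mul_const (d k)).const_add (u k)
    exact (hf k).comp_of_eq 0 hline (by simp)
  have hφmin : IsMinOn (fun t : ℝ => ∑ k, f k (u k + t * d k)) (Icc 0 (u j)) 0 := by
    intro t ht
    simpa [smul_eq_mul, mul_comm] using hmin (hmem t ht)
  simpa [d, mul_sub, sum_sub_distrib, Pi.single_apply] using
    hderiv.nonneg_of_isMinOn_Icc hj hφmin

theorem IsMinOn.exp_marginal_le {ι : Type*} [Fintype ι] {g c u : ι → ℝ}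
    (hmin : IsMinOn (fun v => ∑ k, g k * Real.exp (-(c k * v k))) (stdSimplex ℝ ι) u)
    (hu : u ∈ stdSimplex ℝ ι) (i : ι) {j : ι} (hj : 0 < u j) :
    g i * c i * Real.exp (-(c i * u i)) ≤ g j * c j * Real.exp (-(c j * u j)) := by
  have hf : ∀ k, HasDerivAt (fun x => g k * Real.exp (-(c k * x)))
      (-(g k * c k * Real.exp (-(c k * u k)))) (u k) := fun k =>
    ((((hasDerivAt_id' (u k)).const_mul (c k)).fun_neg.exp).const_mul (g k)).congr_deriv
      (by ring)
  simpa using hmin.deriv_le_of_stdSimplex hu hf i hj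

theorem IsMinOn.exp_pos_of_mul_le {ι : Type*} [Fintype ι] {g c u : ι → ℝ}
    (hg : ∀ k, 0 < g k) (hc : ∀ k, 0 < c k)
    (hmin : IsMinOn (fun v => ∑ k, g k * Real.exp (-(c k * v k))) (stdSimplex ℝ ι) u)
    (hu : u ∈ stdSimplex ℝ ι) {i j : ι} (hgc : g j * c j ≤ g i * c i) (hj : 0 < u j) :
    0 < u i := by
  refine (hu.1 i).lt_of_ne fun hi => ?_
  have hmarg := hmin.exp_marginal_le hu i hj
  rw [← hi, mul_zero, neg_zero, Real.exp_zero, mul_one] at hmarg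
  have hdecay : Real.exp (-(c j * u j)) < 1 := Real.exp_lt_one_iff.2 (by nlinarith [hc j])
  nlinarith [mul_pos (hg j) (hc j)]

theorem stmt_8_general (M : ℕ) (g L : Fin M → ℝ) (β : ℝ)
    (hg : ∀ i, 0 < g i) (hL : ∀ i, 0 < L i) (hβ : 0 < β)
    (hsorted : ∀ i j : Fin M, i ≤ j → g j * L j ≤ g i * L i)
    (u : Fin M → ℝ)
    (hu : u ∈ {u : Fin M → ℝ | (∀ i, 0 ≤ u i) ∧ ∑ i, u i = 1})
    (hmin : IsMinOn (fun v => ∑ i, g i * Real.exp (-(L i * β * v i)))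
      {u : Fin M → ℝ | (∀ i, 0 ≤ u i) ∧ ∑ i, u i = 1} u) :
    ∃ r₀ : Fin M, (∀ s : Fin M, s ≤ r₀ → 0 < u s) ∧ (∀ s : Fin M, r₀ < s → u s = 0) := by
  have hsupp_lower : IsLowerSet {s | 0 < u s} := fun j i hij hj =>
    IsMinOn.exp_pos_of_mul_le (c := fun k => L k * β) hg (fun k => mul_pos (hL k) hβ) hmin hu
      (by simpa only [mul_assoc] using mul_le_mul_of_nonneg_right (hsorted i j hij) hβ.le) hj
  obtain ⟨s₀, -, hs₀⟩ := exists_lt_of_sum_lt (by simp [hu.2] : ∑ _s : Fin M, (0 : ℝ) < ∑ s, u s)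
  obtain ⟨r₀, hr₀⟩ := hsupp_lower.exists_eq_Iic ⟨s₀, hs₀⟩
  refine ⟨r₀, fun s hs => (hr₀.ge hs : 0 < u s), fun s hs => ?_⟩
  refine le_antisymm (not_lt.1 fun hpos => ?_) (hu.1 s)
  exact (hr₀.le hpos : s ≤ r₀).not_gt hs

theorem stmt_8 (M : ℕ) (hM : 1 ≤ M) (g L : Fin M → ℝ) (β : ℝ)
    (hg : ∀ i, 0 < g i) (hL : ∀ i, 0 < L i) (hβ : 0 < β)
    (hsorted : ∀ i j : Fin M, i ≤ j → g j * L j ≤ g i * L i)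
    (u : Fin M → ℝ)
    (hu : u ∈ {u : Fin M → ℝ | (∀ i, 0 ≤ u i) ∧ ∑ i, u i = 1})
    (hmin : IsMinOn (fun v => ∑ i, g i * Real.exp (-(L i * β * v i)))
      {u : Fin M → ℝ | (∀ i, 0 ≤ u i) ∧ ∑ i, u i = 1} u) :
    ∃ r₀ : Fin M, (∀ s : Fin M, s ≤ r₀ → 0 < u s) ∧ (∀ s : Fin M, r₀ < s → u s = 0) :=
  stmt_8_general M g L β hg hL hβ hsorted u hu hmin
end

section
/- Let u* be the minimizer of Σᵢ gᵢ exp(−Lᵢβuᵢ) over the simplex with gᵢ, Lᵢ, β > 0. If g_r ≥ g_{r+1} and L_r ≥ L_{r+1} (equivalently N_r ≤ N_{r+1} for availability Lᵢ ∝ 1/Nᵢ), then u*_r = 0 implies u*_{r+1} = 0. -/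
open Finset

theorem stmt_9 (M : ℕ) (g L : Fin M → ℝ) (β : ℝ)
    (hg : ∀ i, 0 < g i) (hL : ∀ i, 0 < L i) (hβ : 0 < β)
    (u : Fin M → ℝ)
    (hu : u ∈ {u : Fin M → ℝ | (∀ i, 0 ≤ u i) ∧ ∑ i, u i = 1})
    (hmin : IsMinOn (fun v => ∑ i, g i * Real.exp (-(L i * β * v i)))
      {u : Fin M → ℝ | (∀ i, 0 ≤ u i) ∧ ∑ i, u i = 1} u)
    (r s : Fin M) (hrs : (r : ℕ) + 1 = (s : ℕ))
    (hgord : g s ≤ g r) (hLord : L s ≤ L r)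
    (hur : u r = 0) :
    u s = 0 := by
  obtain ⟨hnn, hsum⟩ := hu
  by_contra hne
  have hrne : r ≠ s := by
    intro h; rw [h] at hrs; omega
  have hsne : s ≠ r := fun h => hrne h.symm
  have ht : 0 < u s := lt_of_le_of_ne (hnn s) (Ne.symm hne)
  set c : ℝ := u s / 2 with hc
  have hc0 : 0 < c := by positivity
  set v : Fin M → ℝ := Function.update (Function.update u r c) s c with hv
  have hvr : v r = c := by
    simp [hv, Function.update_apply, hrne]
  have hvs : v s = c := by simp [hv]
  have hvo : ∀ i, i ≠ r → i ≠ s → v i = u i := by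
    intro i h1 h2
    simp [hv, Function.update_apply, h1, h2]
  have key : ∀ w : Fin M → ℝ, ∑ i, w i
      = w r + (w s + ∑ i ∈ (univ.erase r).erase s, w i) := by
    intro w
    rw [← Finset.add_sum_erase _ w (mem_univ r),
      ← Finset.add_sum_erase _ w (Finset.mem_erase.mpr ⟨hsne, mem_univ s⟩)]
  have hrest : ∑ i ∈ (univ.erase r).erase s, v i
      = ∑ i ∈ (univ.erase r).erase s, u i := by
    apply Finset.sum_congr rfl
    intro i hi
    simp only [Finset.mem_erase] at hi
    exact hvo i hi.2.1 hi.1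
  have hvmem : v ∈ {u : Fin M → ℝ | (∀ i, 0 ≤ u i) ∧ ∑ i, u i = 1} := by
    constructor
    · intro i
      by_cases h1 : i = s
      · rw [h1, hvs]; exact hc0.le
      by_cases h2 : i = r
      · rw [h2, hvr]; exact hc0.le
      · rw [hvo i h2 h1]; exact hnn i
    · rw [key v, hvr, hvs, hrest, ← hsum, key u, hur, hc]
      ring
  have hle := hmin hvmem
  simp only [Set.mem_setOf_eq] at hle
  -- expand both sums
  have keyf : ∀ w : Fin M → ℝ,
      ∑ i, g i * Real.exp (-(L i * β * w i))
      = g r * Real.exp (-(L r * β * w r)) + (g s * Real.exp (-(L s * β * w s))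
        + ∑ i ∈ (univ.erase r).erase s, g i * Real.exp (-(L i * β * w i))) := by
    intro w
    rw [← Finset.add_sum_erase _ _ (mem_univ r),
      ← Finset.add_sum_erase _ _ (Finset.mem_erase.mpr ⟨hsne, mem_univ s⟩)]
  have hrestf : ∑ i ∈ (univ.erase r).erase s, g i * Real.exp (-(L i * β * v i))
      = ∑ i ∈ (univ.erase r).erase s, g i * Real.exp (-(L i * β * u i)) := by
    apply Finset.sum_congr rfl
    intro i hi
    simp only [Finset.mem_erase] at hi
    rw [hvo i hi.2.1 hi.1]
  rw [keyf u, keyf v, hvr, hvs, hrestf, hur] at hle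
  have hle' : g r * Real.exp (-(L r * β * 0)) + g s * Real.exp (-(L s * β * u s))
      ≤ g r * Real.exp (-(L r * β * c)) + g s * Real.exp (-(L s * β * c)) := by
    linarith
  set x : ℝ := Real.exp (-(L s * β * c)) with hx
  set y : ℝ := Real.exp (-(L r * β * c)) with hy
  have hx0 : 0 < x := Real.exp_pos _
  have hx1 : x < 1 := by
    rw [hx, show (1:ℝ) = Real.exp 0 by simp]
    apply Real.exp_lt_exp.mpr
    nlinarith [mul_pos (mul_pos (hL s) hβ) hc0]
  have hyx : y ≤ x := by
    apply Real.exp_le_exp.mpr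
    nlinarith [mul_le_mul_of_nonneg_right (mul_le_mul_of_nonneg_right hLord hβ.le) hc0.le]
  have hexs : Real.exp (-(L s * β * u s)) = x * x := by
    rw [hx, ← Real.exp_add]
    congr 1
    rw [hc]; ring
  rw [hexs] at hle'
  have h0 : Real.exp (-(L r * β * 0)) = 1 := by simp
  rw [h0] at hle'
  have h1 : g r * y ≤ g r * x := mul_le_mul_of_nonneg_left hyx (hg r).le
  have h2 : g s * x < g s := by nlinarith [hg s]
  have h3 : 0 < (g r - g s * x) * (1 - x) :=
    mul_pos (by linarith) (by linarith)
  nlinarith [h1, h3]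
end

section
/- Let h : ℝ^M → ℝ be convex and decreasing in each coordinate, and a > 0. Then U(b) = min over the simplex {u ≥ 0, Σuᵢ=1} of h(b·u₁/(b+a), …, b·u_M/(b+a)) is a convex function of b on [0, ∞). -/
open Finset Set

/-!
Write `t = b / (b + a)`. Scaling the simplex by `t` gives the points `x ≥ 0` with `∑ x = t`, and
since `h` is decreasing the infimum does not change if `∑ x ≤ t` is allowed (spread the slack
evenly over the coordinates). So `U b = V t` with `V t = inf {h x | x ≥ 0, ∑ x ≤ t}`. The
constraint set `{(x, t) | x ≥ 0, ∑ x ≤ t}` is convex, so partial minimisation of the convex `h`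
makes `V` convex. As `V` is also decreasing and `b ↦ b / (b + a)` is concave, `U` is convex.
-/

theorem le_mul_csInf_add_mul_csInf {A B : Set ℝ} (hA : A.Nonempty) (hB : B.Nonempty)
    {c l m : ℝ} (hl : 0 ≤ l) (hm : 0 ≤ m) (H : ∀ p ∈ A, ∀ q ∈ B, c ≤ l * p + m * q) :
    c ≤ l * sInf A + m * sInf B := by
  have := hA.to_subtype
  have := hB.to_subtype
  rw [← Subtype.range_coe (s := A), ← Subtype.range_coe (s := B), ← iInf, ← iInf,
    Real.mul_iInf_of_nonneg hl, Real.mul_iInf_of_nonneg hm]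
  exact le_ciInf_add_ciInf fun p q => H p p.2 q q.2

theorem ConvexOn.comp_concaveOn_of_mapsTo {E : Type*} [AddCommGroup E] [Module ℝ E]
    {s : Set E} {t : Set ℝ} {f : E → ℝ} {g : ℝ → ℝ} (hg : ConvexOn ℝ t g)
    (hf : ConcaveOn ℝ s f) (hg' : AntitoneOn g t) (hst : MapsTo f s t) :
    ConvexOn ℝ s (g ∘ f) :=
  ⟨hf.1, fun _ hx _ hy _ _ ha hb hab =>
    (hg' (hg.1 (hst hx) (hst hy) ha hb hab) (hst (hf.1 hx hy ha hb hab))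
      (hf.2 hx hy ha hb hab)).trans (hg.2 (hst hx) (hst hy) ha hb hab)⟩

theorem ConvexOn.sInf_image_fiber {E F : Type*} [AddCommGroup E] [Module ℝ E]
    [AddCommGroup F] [Module ℝ F] {S : F → Set E} (hS : Convex ℝ {p : E × F | p.1 ∈ S p.2})
    {s : Set F} (hs : Convex ℝ s) {f : E → ℝ} (hf : ConvexOn ℝ univ f)
    (hne : ∀ y ∈ s, (S y).Nonempty) (hbdd : ∀ y ∈ s, BddBelow (f '' S y)) :
    ConvexOn ℝ s fun y => sInf (f '' S y) := by
  refine ⟨hs, fun y₁ hy₁ y₂ hy₂ l m hl hm hlm => ?_⟩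
  simp only [smul_eq_mul]
  refine le_mul_csInf_add_mul_csInf ((hne y₁ hy₁).image f) ((hne y₂ hy₂).image f) hl hm ?_
  rintro _ ⟨x₁, hx₁, rfl⟩ _ ⟨x₂, hx₂, rfl⟩
  have hmem : l • x₁ + m • x₂ ∈ S (l • y₁ + m • y₂) :=
    hS (show (x₁, y₁) ∈ _ from hx₁) (show (x₂, y₂) ∈ _ from hx₂) hl hm hlm
  calc sInf (f '' S (l • y₁ + m • y₂)) ≤ f (l • x₁ + m • x₂) :=
        csInf_le (hbdd _ (hs hy₁ hy₂ hl hm hlm)) (mem_image_of_mem f hmem)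
    _ ≤ l • f x₁ + m • f x₂ := hf.2 (mem_univ _) (mem_univ _) hl hm hlm

theorem concaveOn_div_add_const {a : ℝ} (ha : 0 ≤ a) :
    ConcaveOn ℝ (Ioi (-a)) fun b => b / (b + a) := by
  refine ⟨convex_Ioi _, fun x hx y hy l m hl hm hlm => ?_⟩
  have hZ : 0 < l • x + m • y + a := neg_lt_iff_pos_add.mp (convex_Ioi _ hx hy hl hm hlm)
  rw [Set.mem_Ioi, neg_lt_iff_pos_add] at hx hy
  simp only [smul_eq_mul] at hZ ⊢
  rw [mul_div_assoc', mul_div_assoc', div_add_div _ _ hx.ne' hy.ne',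
    div_le_div_iff₀ (by positivity) hZ]
  obtain rfl : m = 1 - l := by linarith
  nlinarith [mul_nonneg (mul_nonneg (mul_nonneg hl hm) ha) (sq_nonneg (x - y))]

def cornerSimplex (ι : Type*) [Fintype ι] (t : ℝ) : Set (ι → ℝ) :=
  {x | (∀ i, 0 ≤ x i) ∧ ∑ i, x i ≤ t}

namespace cornerSimplex

variable {ι : Type*} [Fintype ι] {t : ℝ} {x : ι → ℝ}

theorem convex_graph : Convex ℝ {p : (ι → ℝ) × ℝ | p.1 ∈ cornerSimplex ι p.2} := by
  rintro ⟨x, s⟩ ⟨hx₀, hxs⟩ ⟨y, t⟩ ⟨hy₀, hyt⟩ l m hl hm -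
  refine ⟨fun i => ?_, ?_⟩
  · simp only [Prod.smul_mk, Prod.mk_add_mk, Pi.add_apply, Pi.smul_apply, smul_eq_mul]
    have := hx₀ i; have := hy₀ i; positivity
  · simp only [Prod.smul_mk, Prod.mk_add_mk, Pi.add_apply, Pi.smul_apply, smul_eq_mul,
      sum_add_distrib, ← mul_sum]
    gcongr

theorem nonempty (ht : 0 ≤ t) : (cornerSimplex ι t).Nonempty :=
  ⟨0, fun _ => le_rfl, by simpa using ht⟩

theorem mono : Monotone (cornerSimplex ι) :=
  fun _ _ hst _ hx => ⟨hx.1, hx.2.trans hst⟩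

theorem le_const (hx : x ∈ cornerSimplex ι t) : x ≤ fun _ => t :=
  fun i => (single_le_sum (fun j _ => hx.1 j) (mem_univ i)).trans hx.2

theorem bddBelow_image {h : (ι → ℝ) → ℝ} (hh : Antitone h) (t : ℝ) :
    BddBelow (h '' cornerSimplex ι t) := by
  refine ⟨h fun _ => t, ?_⟩
  rintro _ ⟨x, hx, rfl⟩
  exact hh (le_const hx)

theorem smul_mem (ht : 0 ≤ t) {u : ι → ℝ} (hu : u ∈ stdSimplex ℝ ι) :
    t • u ∈ cornerSimplex ι t :=
  ⟨fun i => mul_nonneg ht (hu.1 i), by simp [← mul_sum, hu.2]⟩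

theorem exists_mem_stdSimplex_le_smul [Nonempty ι] (hx : x ∈ cornerSimplex ι t) :
    ∃ u ∈ stdSimplex ℝ ι, x ≤ t • u := by
  rcases ((sum_nonneg fun i _ => hx.1 i).trans hx.2).eq_or_lt with rfl | ht
  · obtain ⟨u, hu⟩ := (isPathConnected_stdSimplex ι).nonempty
    exact ⟨u, hu, fun i => by simpa using le_const hx i⟩
  set d := (t - ∑ i, x i) / Fintype.card ι
  have hd : 0 ≤ d := div_nonneg (sub_nonneg.mpr hx.2) (Nat.cast_nonneg _)
  refine ⟨fun i => (x i + d) / t, ⟨fun i => div_nonneg (add_nonneg (hx.1 i) hd) ht.le, ?_⟩,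
    fun i => ?_⟩
  · rw [← sum_div, sum_add_distrib, sum_const, card_univ, nsmul_eq_mul,
      mul_div_cancel₀ _ (Nat.cast_ne_zero.mpr Fintype.card_ne_zero), add_sub_cancel,
      div_self ht.ne']
  · simp only [Pi.smul_apply, smul_eq_mul, mul_div_cancel₀ _ ht.ne']
    linarith

end cornerSimplex

section

variable {ι : Type*} [Fintype ι] {h : (ι → ℝ) → ℝ}

noncomputable def infOnCornerSimplex (h : (ι → ℝ) → ℝ) (t : ℝ) : ℝ :=
  sInf (h '' cornerSimplex ι t)

theorem sInf_image_smul_stdSimplex [Nonempty ι] (hh : Antitone h) {t : ℝ} (ht : 0 ≤ t) :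
    sInf ((fun u => h (t • u)) '' stdSimplex ℝ ι) = infOnCornerSimplex h t := by
  have hsub : (fun u => h (t • u)) '' stdSimplex ℝ ι ⊆ h '' cornerSimplex ι t := by
    rintro _ ⟨u, hu, rfl⟩
    exact mem_image_of_mem h (cornerSimplex.smul_mem ht hu)
  have hne : ((fun u => h (t • u)) '' stdSimplex ℝ ι).Nonempty :=
    (isPathConnected_stdSimplex ι).nonempty.image _
  refine le_antisymm (le_csInf ((cornerSimplex.nonempty ht).image h) ?_)
    (csInf_le_csInf (cornerSimplex.bddBelow_image hh t) hne hsub)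
  rintro _ ⟨x, hx, rfl⟩
  obtain ⟨u, hu, hxu⟩ := cornerSimplex.exists_mem_stdSimplex_le_smul hx
  exact (csInf_le ((cornerSimplex.bddBelow_image hh t).mono hsub) (mem_image_of_mem _ hu)).trans
    (hh hxu)

theorem convexOn_infOnCornerSimplex (hconv : ConvexOn ℝ univ h) (hh : Antitone h) :
    ConvexOn ℝ (Ici 0) (infOnCornerSimplex h) :=
  hconv.sInf_image_fiber cornerSimplex.convex_graph (convex_Ici 0)
    (fun _ ht => cornerSimplex.nonempty ht) (fun t _ => cornerSimplex.bddBelow_image hh t)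

theorem antitoneOn_infOnCornerSimplex (hh : Antitone h) :
    AntitoneOn (infOnCornerSimplex h) (Ici 0) := fun _ hs _ _ hst =>
  csInf_le_csInf (cornerSimplex.bddBelow_image hh _) ((cornerSimplex.nonempty hs).image h)
    (image_mono (cornerSimplex.mono hst))

end

theorem stmt_11 (M : ℕ) (hM : 1 ≤ M) (h : (Fin M → ℝ) → ℝ) (a : ℝ) (ha : 0 < a)
    (hconv : ConvexOn ℝ Set.univ h)
    (hdec : ∀ x y : Fin M → ℝ, (∀ i, x i ≤ y i) → h y ≤ h x)
    (U : ℝ → ℝ)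
    (hU : ∀ b, U b = sInf ((fun u => h (fun i => b * u i / (b + a))) ''
      {u : Fin M → ℝ | (∀ i, 0 ≤ u i) ∧ ∑ i, u i = 1})) :
    ConvexOn ℝ (Ici 0) U := by
  have : Nonempty (Fin M) := ⟨⟨0, hM⟩⟩
  have hh : Antitone h := fun x y hxy => hdec x y hxy
  have hφ : ConcaveOn ℝ (Ici 0) fun b => b / (b + a) :=
    (concaveOn_div_add_const ha.le).subset (Ici_subset_Ioi.mpr (neg_lt_zero.mpr ha))
      (convex_Ici 0)
  have hmaps : MapsTo (fun b => b / (b + a)) (Ici 0) (Ici 0) :=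
    fun b hb => div_nonneg hb (add_nonneg hb ha.le)
  refine ((convexOn_infOnCornerSimplex hconv hh).comp_concaveOn_of_mapsTo hφ
    (antitoneOn_infOnCornerSimplex hh) hmaps).congr fun b hb => ?_
  rw [hU, Function.comp_apply, ← sInf_image_smul_stdSimplex hh (hmaps hb)]
  simp only [Pi.smul_def, smul_eq_mul, div_mul_eq_mul_div]
  rfl
end

section
/- In the M-class caching problem with gᵢ, Lᵢ > 0, sorted so g₁L₁ > g₂L₂ ≥ … ≥ g_ML_M, and a > 0 fixed, there exists ε > 0 such that for all 0 < b < ε the optimal policy over the simplex is u* = (1,0,…,0), and the optimal missed cache rate equals g₁·exp(−L₁·b/(b+a)) + Σ_{i>1} gᵢ. -/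
/-!
Write `t = b / (b + a)` and `kᵢ = Lᵢ t`. The objective `∑ gᵢ exp (-kᵢ uᵢ)` is convex, so it lies
above its tangent plane at the vertex `e = e_{i₀}`, strictly in the `i₀` coordinate. Moving a mass
`δ = 1 - u_{i₀}` off the vertex therefore costs at least
`δ (g_{i₀} k_{i₀} exp (-k_{i₀}) - max_{i ≠ i₀} gᵢ kᵢ)`, which is positive once `g_{i₀} L_{i₀} exp (-L_{i₀} t) ≥ gᵢ Lᵢ` for `i ≠ i₀`. As `b → 0` we have
`t → 0`, and the strict inequality `gᵢ Lᵢ < g_{i₀} L_{i₀}` makes this hold for all small `b`.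
-/

open Finset Set

open Filter Topology Real

section Vertex

variable {ι : Type*} [Fintype ι] [DecidableEq ι] {i₀ : ι}

lemma sum_erase_eq_one_sub_of_mem_stdSimplex {u : ι → ℝ} (hu : u ∈ stdSimplex ℝ ι) :
    ∑ i ∈ univ.erase i₀, u i = 1 - u i₀ := by
  rw [← hu.2, ← add_sum_erase univ u (mem_univ i₀)]
  ring

lemma eq_single_of_mem_stdSimplex {u : ι → ℝ} (hu : u ∈ stdSimplex ℝ ι) (h : u i₀ = 1) :
    u = Pi.single i₀ 1 := by
  have hrest : ∑ i ∈ univ.erase i₀, u i = 0 := by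
    rw [sum_erase_eq_one_sub_of_mem_stdSimplex hu, h, sub_self]
  funext i
  rcases eq_or_ne i i₀ with rfl | hi
  · simp [h]
  · rw [Pi.single_eq_of_ne hi]
    exact (sum_eq_zero_iff_of_nonneg fun j _ => hu.1 j).1 hrest i (mem_erase.2 ⟨hi, mem_univ i⟩)

lemma sum_mul_exp_neg_mul_single (g k : ι → ℝ) (i₀ : ι) :
    ∑ i, g i * exp (-(k i * (Pi.single i₀ 1 : ι → ℝ) i)) =
      g i₀ * exp (-k i₀) + ∑ i ∈ univ.erase i₀, g i := by
  rw [← add_sum_erase _ _ (mem_univ i₀)]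
  congr 1
  · simp
  · exact sum_congr rfl fun i hi => by simp [Pi.single_eq_of_ne (ne_of_mem_erase hi)]

theorem sum_mul_exp_neg_mul_single_lt {g k u : ι → ℝ} (hg : ∀ i, 0 ≤ g i) (hg₀ : 0 < g i₀)
    (hk₀ : 0 < k i₀) (hdom : ∀ i ≠ i₀, g i * k i ≤ g i₀ * k i₀ * exp (-k i₀))
    (hu : u ∈ stdSimplex ℝ ι) (hne : u ≠ Pi.single i₀ 1) :
    ∑ i, g i * exp (-(k i * (Pi.single i₀ 1 : ι → ℝ) i)) < ∑ i, g i * exp (-(k i * u i)) := by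
  set D := g i₀ * k i₀ * exp (-k i₀)
  set δ := 1 - u i₀
  have hδ : 0 < δ := by
    have hle : u i₀ ≤ 1 := (mem_Icc_of_mem_stdSimplex hu i₀).2
    have hne₁ : u i₀ ≠ 1 := fun h => hne (eq_single_of_mem_stdSimplex hu h)
    exact sub_pos.2 (lt_of_le_of_ne hle hne₁)
  have hvertex : g i₀ * exp (-k i₀) + D * δ < g i₀ * exp (-(k i₀ * u i₀)) := by
    have hexp : k i₀ * δ + 1 < exp (k i₀ * δ) := add_one_lt_exp (by positivity)
    have hsplit : exp (-(k i₀ * u i₀)) = exp (-k i₀) * exp (k i₀ * δ) := by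
      rw [← exp_add]; congr 1; simp only [δ]; ring
    rw [hsplit]
    nlinarith [mul_pos hg₀ (exp_pos (-k i₀))]
  have hother : ∀ i ∈ univ.erase i₀, g i - D * u i ≤ g i * exp (-(k i * u i)) := by
    intro i hi
    have htangent := add_one_le_exp (-(k i * u i))
    have hdomi := hdom i (ne_of_mem_erase hi)
    nlinarith [mul_le_mul_of_nonneg_left htangent (hg i), mul_le_mul_of_nonneg_right hdomi (hu.1 i)]
  have hrest : ∑ i ∈ univ.erase i₀, g i - D * δ ≤
      ∑ i ∈ univ.erase i₀, g i * exp (-(k i * u i)) := by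
    calc ∑ i ∈ univ.erase i₀, g i - D * δ = ∑ i ∈ univ.erase i₀, (g i - D * u i) := by
          rw [sum_sub_distrib, ← mul_sum, sum_erase_eq_one_sub_of_mem_stdSimplex hu]
      _ ≤ _ := sum_le_sum hother
  rw [sum_mul_exp_neg_mul_single, ← add_sum_erase _ _ (mem_univ i₀)]
  linarith

end Vertex

lemma eventually_lt_mul_exp_neg_mul_div_add {ι : Type*} [Finite ι] {c : ι → ℝ} {C L a : ℝ}
    (ha : a ≠ 0) (hc : ∀ i, c i < C) :
    ∀ᶠ b in 𝓝 0, ∀ i, c i < C * exp (-(L * (b / (b + a)))) := by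
  have hlim : Tendsto (fun b => C * exp (-(L * (b / (b + a))))) (𝓝 0) (𝓝 C) := by
    have hcont : ContinuousAt (fun b : ℝ => C * exp (-(L * (b / (b + a))))) 0 :=
      ContinuousAt.mul continuousAt_const <| (continuousAt_const.mul
        (continuousAt_id.div (continuousAt_id.add continuousAt_const) (by simpa))).neg.rexp
    simpa using hcont.tendsto
  exact eventually_all.2 fun i => hlim.eventually_const_lt (hc i)

theorem stmt_12 (M : ℕ) (hM : 1 ≤ M) (g L : Fin M → ℝ) (a : ℝ)
    (hg : ∀ i, 0 < g i) (hL : ∀ i, 0 < L i) (ha : 0 < a)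
    (hsorted : ∀ i : Fin M, i ≠ ⟨0, hM⟩ → g i * L i < g ⟨0, hM⟩ * L ⟨0, hM⟩)
    (e : Fin M → ℝ) (he : ∀ i, e i = if i = ⟨0, hM⟩ then 1 else 0) :
    ∃ ε > 0, ∀ b : ℝ, 0 < b → b < ε →
      (∀ u ∈ {u : Fin M → ℝ | (∀ i, 0 ≤ u i) ∧ ∑ i, u i = 1}, u ≠ e →
        (∑ i, g i * Real.exp (-(L i * (b / (b + a)) * e i))) <
        (∑ i, g i * Real.exp (-(L i * (b / (b + a)) * u i)))) ∧
      (∑ i, g i * Real.exp (-(L i * (b / (b + a)) * e i))) =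
        g ⟨0, hM⟩ * Real.exp (-(L ⟨0, hM⟩ * b / (b + a))) +
          ∑ i ∈ Finset.univ.erase ⟨0, hM⟩, g i := by
  set i₀ : Fin M := ⟨0, hM⟩
  obtain rfl : e = Pi.single i₀ 1 := funext fun i => by rw [he, Pi.single_apply]
  have hevent := eventually_lt_mul_exp_neg_mul_div_add (L := L i₀) ha.ne'
    (fun i : {i // i ≠ i₀} => hsorted i i.2)
  obtain ⟨ε, hε, hsmall⟩ := Metric.eventually_nhds_iff.1 hevent
  refine ⟨ε, hε, fun b hb hbε => ⟨fun u hu hne => ?_, ?_⟩⟩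
  · have ht : 0 < b / (b + a) := by positivity
    refine sum_mul_exp_neg_mul_single_lt (fun i => (hg i).le) (hg i₀) (mul_pos (hL i₀) ht)
      (fun i hi => ?_) hu hne
    have hbdist : dist b 0 < ε := by rwa [Real.dist_0_eq_abs, abs_of_pos hb]
    linarith [mul_le_mul_of_nonneg_right (hsmall hbdist ⟨i, hi⟩).le ht.le]
  · rw [sum_mul_exp_neg_mul_single, mul_div_assoc]
end
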